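/- arXiv:1903.11938 — 3 statements merged into one kernel-verified Lean document; each statement's English description precedes it below -/
import Mathlib

section
/- Consider ℤ² with the supremum metric d_∞ and the measure μ defined by μ(n,m) = 4^{|m|} if n = 0; μ(n,m) = 2^{n²} if n < 0 and m = 0; and μ(n,m) = 1 otherwise. Let g(n,m) = 2^{n²} if n > 0 and m = 0, and g(n,m) = 0 otherwise. Then the centered maximal function satisfies M^c g(−1,0) < ∞. Consequently, the centered maximal operator M^c associated with this space does not possess the dichotomy property. -/
open MeasureTheory Metric Filter Set ENNReal

/-- The centered Hardy–Littlewood maximal function of `f` at `x`,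
with respect to the measure `μ`. -/
noncomputable def centeredMaximal {X : Type*} [MeasurableSpace X] [PseudoMetricSpace X]
    (μ : Measure X) (f : X → ℝ) (x : X) : ℝ≥0∞ :=
  ⨆ (r : ℝ) (_ : 0 < r),
    (∫⁻ y in Metric.ball x r, ENNReal.ofReal |f y| ∂μ) / μ (Metric.ball x r)

/-- The non-centered Hardy–Littlewood maximal function of `f` at `x`:
the supremum is taken over all open balls containing `x`. -/
noncomputable def noncenteredMaximal {X : Type*} [MeasurableSpace X] [PseudoMetricSpace X]
    (μ : Measure X) (f : X → ℝ) (x : X) : ℝ≥0∞ :=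
  ⨆ (c : X) (r : ℝ) (_ : 0 < r) (_ : x ∈ Metric.ball c r),
    (∫⁻ y in Metric.ball c r, ENNReal.ofReal |f y| ∂μ) / μ (Metric.ball c r)

/-- `f ∈ L¹_loc(μ)`: `∫_B |f| dμ < ∞` for every open ball `B`. -/
def LocallyIntegrableBall {X : Type*} [MeasurableSpace X] [PseudoMetricSpace X]
    (μ : Measure X) (f : X → ℝ) : Prop :=
  ∀ (c : X) (r : ℝ), 0 < r → (∫⁻ y in Metric.ball c r, ENNReal.ofReal |f y| ∂μ) < ⊤

/-! The reflection `(n, m) ↦ (-2 - n, m)` is an isometry fixing `(-1, 0)`; it sends a point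
`(n, 0)`, `n > 0`, of the support of `g`, where `g μ` has mass `2^{n²}`, to `(-2 - n, 0)`, of
mass `2^{(n+2)²}`. Hence every ball centred at `(-1, 0)` carries at least as much `μ`-mass as
`g μ`-mass, and `M^c g(-1, 0) ≤ 1`. Around `(1, 0)`, the ball of radius `k + 1` contains
`(k + 1, 0)`, of `g μ`-mass `2^{(k+1)²}`, while each of its `(2k + 1)²` points has weight at most
`2^{k² + 1}` (along the axis `n = 0` the weights `4^{|m|}` grow only exponentially). The averages
are thus at least `4^k / (2k + 1)²`, so `M^c g(1, 0) = ∞` although `μ{(1, 0)} = 1`. -/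

section Discrete

variable {X : Type*} [MeasurableSpace X] [MeasurableSingletonClass X]

theorem measure_eq_tsum_measure_singleton [Countable X] (μ : Measure X) (s : Set X) :
    μ s = ∑' y : s, μ {(y : X)} := by
  rw [tsum_subtype s fun y => μ {y},
    Measure.tsum_indicator_apply_singleton μ s s.to_countable.measurableSet]

theorem withDensity_count_singleton (w : X → ℝ≥0∞) (x : X) :
    Measure.count.withDensity w {x} = w x := by
  rw [withDensity_apply _ (measurableSet_singleton x), lintegral_singleton,
    Measure.count_singleton, mul_one]

omit [MeasurableSingletonClass X] in
theorem lintegral_div_measure_ball_le_centeredMaximal [PseudoMetricSpace X] (μ : Measure X)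
    (f : X → ℝ) (x : X) {r : ℝ} (hr : 0 < r) :
    (∫⁻ y in ball x r, ENNReal.ofReal |f y| ∂μ) / μ (ball x r) ≤ centeredMaximal μ f x :=
  le_iSup₂ (f := fun r (_ : 0 < r) =>
    (∫⁻ y in ball x r, ENNReal.ofReal |f y| ∂μ) / μ (ball x r)) r hr

theorem centeredMaximal_le_one_of_isometry [MetricSpace X] [Countable X] (μ : Measure X)
    (f : X → ℝ) {x : X} {φ : X → X} (hφ : Isometry φ) (hx : φ x = x)
    (hf : ∀ y, ENNReal.ofReal |f y| * μ {y} ≤ μ {φ y}) :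
    centeredMaximal μ f x ≤ 1 := by
  refine iSup₂_le fun r _ => ENNReal.div_le_of_le_mul ?_
  have hmaps : MapsTo φ (ball x r) (ball x r) := fun y hy => by
    rwa [mem_ball, ← hx, hφ.dist_eq]
  calc ∫⁻ y in ball x r, ENNReal.ofReal |f y| ∂μ
      = ∑' y : ball x r, ENNReal.ofReal |f y| * μ {(y : X)} :=
        lintegral_countable _ (to_countable _)
    _ ≤ ∑' y : ball x r, μ {φ y} := ENNReal.tsum_le_tsum fun y => hf y
    _ ≤ ∑' y : ball x r, μ {(y : X)} :=
        ENNReal.tsum_comp_le_tsum_of_injective (f := hmaps.restrict)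
          (hmaps.restrict_inj.2 hφ.injective.injOn) fun y : ball x r => μ {(y : X)}
    _ = 1 * μ (ball x r) := by rw [one_mul, measure_eq_tsum_measure_singleton]

theorem locallyIntegrableBall_of_measure_singleton_ne_top [MetricSpace X] [ProperSpace X]
    [DiscreteTopology X] (μ : Measure X) (hμ : ∀ y, μ {y} ≠ ∞) (f : X → ℝ) :
    LocallyIntegrableBall μ f := by
  intro c r _
  have hfin := (isCompact_closedBall c r).finite_of_discrete
  calc ∫⁻ y in ball c r, ENNReal.ofReal |f y| ∂μ
      ≤ ∫⁻ y in (hfin.toFinset : Set X), ENNReal.ofReal |f y| ∂μ :=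
        lintegral_mono_set (by simpa using ball_subset_closedBall)
    _ = ∑ y ∈ hfin.toFinset, ENNReal.ofReal |f y| * μ {y} := lintegral_finset _ _
    _ < ⊤ := ENNReal.sum_lt_top.2 fun y _ => ENNReal.mul_lt_top ofReal_lt_top (hμ y).lt_top

end Discrete

theorem exists_mul_two_mul_add_one_sq_le_four_pow (n : ℕ) :
    ∃ k : ℕ, n * (2 * k + 1) ^ 2 ≤ 4 ^ k := by
  have hlim := (tendsto_pow_const_div_const_pow_of_one_lt 2 (one_lt_two : (1 : ℝ) < 2)).eventually
    (gt_mem_nhds (by positivity : (0 : ℝ) < 1 / (9 * n + 1)))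
  obtain ⟨k, hk, hk1⟩ := (hlim.and (eventually_ge_atTop 1)).exists
  refine ⟨k, ?_⟩
  rw [div_lt_div_iff₀ (by positivity) (by positivity), one_mul] at hk
  have hk' : k ^ 2 * (9 * n + 1) < 2 ^ k := by exact_mod_cast hk
  have hsq : (2 * k + 1) ^ 2 ≤ 9 * k ^ 2 := by nlinarith
  calc n * (2 * k + 1) ^ 2 ≤ n * (9 * k ^ 2) := Nat.mul_le_mul_left n hsq
    _ ≤ k ^ 2 * (9 * n + 1) := by nlinarith
    _ ≤ 4 ^ k := hk'.le.trans (Nat.pow_le_pow_left (by norm_num) k)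

namespace SupMetricCounterexample

noncomputable def weight : ℤ × ℤ → ℝ≥0∞ := fun p : ℤ × ℤ =>
  if p.1 = 0 then (4 : ℝ≥0∞) ^ p.2.natAbs
  else if p.1 < 0 ∧ p.2 = 0 then (2 : ℝ≥0∞) ^ (p.1 ^ 2).toNat
  else 1

noncomputable def spike : ℤ × ℤ → ℝ :=
  fun p : ℤ × ℤ => if 0 < p.1 ∧ p.2 = 0 then (2 : ℝ) ^ (p.1 ^ 2).toNat else 0

def reflect (p : ℤ × ℤ) : ℤ × ℤ := (-2 - p.1, p.2)

local notation "μ₀" => Measure.count.withDensity weight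

theorem weight_ne_top (p : ℤ × ℤ) : weight p ≠ ∞ := by
  unfold weight
  split_ifs
  exacts [pow_ne_top ofNat_ne_top, pow_ne_top ofNat_ne_top, one_ne_top]

theorem measure_singleton_eq_weight (p : ℤ × ℤ) : μ₀ {p} = weight p :=
  withDensity_count_singleton weight p

theorem mem_ball_natCast_add_one {c p : ℤ × ℤ} {k : ℕ} :
    p ∈ ball c (k + 1) ↔ |p.1 - c.1| ≤ k ∧ |p.2 - c.2| ≤ k := by
  simp only [mem_ball, Prod.dist_eq, Int.dist_eq, max_lt_iff]
  norm_cast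
  push_cast [Int.lt_add_one_iff]
  rfl

theorem isometry_reflect : Isometry reflect :=
  (Isometry.of_dist_eq fun a b : ℤ => dist_sub_left (-2) a b).prodMap isometry_id

theorem spike_mul_weight_le_weight_reflect (p : ℤ × ℤ) :
    ENNReal.ofReal |spike p| * weight p ≤ weight (reflect p) := by
  obtain ⟨n, m⟩ := p
  by_cases h : 0 < n ∧ m = 0
  · obtain ⟨hn, rfl⟩ := h
    have hpos : ¬ n < 0 := by omega
    simp only [spike, weight, reflect, hn, hn.ne', hpos, and_true, if_true, if_false,
      show ¬ (-2 - n = 0) by omega, show -2 - n < 0 by omega, mul_one]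
    rw [abs_of_nonneg (by positivity), ENNReal.ofReal_pow zero_le_two, ENNReal.ofReal_ofNat]
    exact pow_le_pow_right₀ one_le_two (Int.toNat_le_toNat (by nlinarith))
  · simp [spike, h]

theorem centeredMaximal_spike_neg_one_le_one : centeredMaximal μ₀ spike (-1, 0) ≤ 1 :=
  centeredMaximal_le_one_of_isometry μ₀ spike isometry_reflect (by simp [reflect]) fun p => by
    simpa only [measure_singleton_eq_weight] using spike_mul_weight_le_weight_reflect p

theorem weight_le_of_mem_ball {k : ℕ} {p : ℤ × ℤ} (hp : p ∈ ball (1, 0) (k + 1)) :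
    weight p ≤ 2 ^ (k ^ 2 + 1) := by
  rw [mem_ball_natCast_add_one] at hp
  obtain ⟨n, m⟩ := p
  obtain ⟨h1, h2⟩ := hp
  simp only [sub_zero] at h2
  rw [abs_le] at h1
  unfold weight
  split_ifs with h0 hneg
  · rw [show (4 : ℝ≥0∞) = 2 ^ 2 by norm_num, ← pow_mul]
    refine pow_le_pow_right₀ one_le_two ?_
    zify
    nlinarith [sq_nonneg ((k : ℤ) - 1)]
  · refine pow_le_pow_right₀ one_le_two (Int.toNat_le.2 ?_)
    push_cast
    nlinarith [hneg.1]
  · exact one_le_pow₀ one_le_two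

theorem ball_one_zero_eq_box (k : ℕ) :
    ball ((1, 0) : ℤ × ℤ) (k + 1) =
      ↑(Finset.Icc (1 - (k : ℤ)) (1 + k) ×ˢ Finset.Icc (-(k : ℤ)) k) := by
  ext p
  simp only [mem_ball_natCast_add_one, abs_le, Finset.coe_product, Finset.coe_Icc, mem_prod,
    mem_Icc]
  omega

theorem measure_ball_one_zero_le (k : ℕ) :
    μ₀ (ball (1, 0) (k + 1)) ≤ (2 * k + 1) ^ 2 * 2 ^ (k ^ 2 + 1) := by
  have hbound : ∀ p ∈ Finset.Icc (1 - (k : ℤ)) (1 + k) ×ˢ Finset.Icc (-(k : ℤ)) k,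
      μ₀ {p} ≤ 2 ^ (k ^ 2 + 1) := fun p hp => by
    rw [measure_singleton_eq_weight]
    exact weight_le_of_mem_ball (by rwa [ball_one_zero_eq_box])
  have hcard : (Finset.Icc (1 - (k : ℤ)) (1 + k) ×ˢ Finset.Icc (-(k : ℤ)) k).card
      = (2 * k + 1) ^ 2 := by
    rw [Finset.card_product, Int.card_Icc, Int.card_Icc, sq]
    congr 1 <;> omega
  rw [ball_one_zero_eq_box, ← sum_measure_singleton]
  refine (Finset.sum_le_card_nsmul _ _ _ hbound).trans_eq ?_
  rw [hcard, nsmul_eq_mul]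
  push_cast
  rfl

theorem two_pow_le_lintegral_spike_ball (k : ℕ) :
    2 ^ ((k + 1) ^ 2) ≤ ∫⁻ y in ball (1, 0) (k + 1), ENNReal.ofReal |spike y| ∂μ₀ := by
  have hmem : (((k : ℤ) + 1, 0) : ℤ × ℤ) ∈ ball (1, 0) (k + 1) :=
    mem_ball_natCast_add_one.2 (by simp)
  refine le_of_eq_of_le ?_ (lintegral_mono_set (singleton_subset_iff.2 hmem))
  rw [lintegral_singleton, measure_singleton_eq_weight]
  have htoNat : (((k : ℤ) + 1) ^ 2).toNat = (k + 1) ^ 2 := by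
    rw [show ((k : ℤ) + 1) ^ 2 = (((k + 1) ^ 2 : ℕ) : ℤ) by push_cast; ring, Int.toNat_natCast]
  simp [spike, weight, htoNat, show ¬ ((k : ℤ) + 1 < 0) by omega, show (k : ℤ) + 1 ≠ 0 by omega]

theorem centeredMaximal_spike_one_eq_top : centeredMaximal μ₀ spike (1, 0) = ⊤ := by
  by_contra hfin
  obtain ⟨n, hn⟩ := ENNReal.exists_nat_gt hfin
  obtain ⟨k, hk⟩ := exists_mul_two_mul_add_one_sq_le_four_pow n
  have hball_ne_top : μ₀ (ball (1, 0) (k + 1)) ≠ ⊤ :=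
    ne_top_of_le_ne_top (by finiteness) (measure_ball_one_zero_le k)
  have hspike_ne_zero : ∫⁻ y in ball (1, 0) (k + 1), ENNReal.ofReal |spike y| ∂μ₀ ≠ 0 :=
    (lt_of_lt_of_le (by positivity) (two_pow_le_lintegral_spike_ball k)).ne'
  refine hn.not_ge (le_trans ?_ (lintegral_div_measure_ball_le_centeredMaximal μ₀ spike (1, 0)
    (by positivity : (0 : ℝ) < k + 1)))
  rw [ENNReal.le_div_iff_mul_le (Or.inr hspike_ne_zero) (Or.inl hball_ne_top)]
  calc (n : ℝ≥0∞) * μ₀ (ball (1, 0) (k + 1))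
      ≤ n * ((2 * k + 1) ^ 2 * 2 ^ (k ^ 2 + 1)) := mul_le_mul_right (measure_ball_one_zero_le k) _
    _ = ((n * (2 * k + 1) ^ 2 : ℕ) : ℝ≥0∞) * 2 ^ (k ^ 2 + 1) := by push_cast; ring
    _ ≤ ((4 ^ k : ℕ) : ℝ≥0∞) * 2 ^ (k ^ 2 + 1) := mul_le_mul_left (by exact_mod_cast hk) _
    _ = 2 ^ ((k + 1) ^ 2) := by
      rw [Nat.cast_pow, show ((4 : ℕ) : ℝ≥0∞) = 2 ^ 2 by norm_num, ← pow_mul, ← pow_add]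
      ring_nf
    _ ≤ _ := two_pow_le_lintegral_spike_ball k

end SupMetricCounterexample

open SupMetricCounterexample in
/-- On `ℤ²` with the supremum metric and measure with point weights
`μ(n,m) = 4^{|m|}` if `n = 0`, `μ(n,m) = 2^{n²}` if `n < 0, m = 0`, and `1` otherwise,
for `g(n,m) = 2^{n²}` if `n > 0, m = 0` and `0` otherwise, the centered maximal function
satisfies `M^c g(−1,0) < ∞`; consequently the centered maximal operator does not possess
the dichotomy property. -/
theorem centeredMaximal_lt_top_and_no_dichotomy (μ : Measure (ℤ × ℤ))
    (hμ : μ = Measure.count.withDensity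
      (fun p : ℤ × ℤ =>
        if p.1 = 0 then (4 : ℝ≥0∞) ^ p.2.natAbs
        else if p.1 < 0 ∧ p.2 = 0 then (2 : ℝ≥0∞) ^ (p.1 ^ 2).toNat
        else 1))
    (g : ℤ × ℤ → ℝ)
    (hg : g = fun p : ℤ × ℤ => if 0 < p.1 ∧ p.2 = 0 then (2 : ℝ) ^ (p.1 ^ 2).toNat else 0) :
    centeredMaximal μ g ((-1, 0) : ℤ × ℤ) < ⊤ ∧
    ¬ (∀ h : ℤ × ℤ → ℝ, LocallyIntegrableBall μ h →
        μ {x | centeredMaximal μ h x = ⊤} = 0 ∨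
          {x | centeredMaximal μ h x = ⊤} = Set.univ) := by
  obtain rfl : μ = Measure.count.withDensity weight := hμ
  obtain rfl : g = spike := hg
  have hfinite : centeredMaximal _ spike (-1, 0) < ⊤ :=
    centeredMaximal_spike_neg_one_le_one.trans_lt one_lt_top
  refine ⟨hfinite, fun hdichotomy => ?_⟩
  have hloc := locallyIntegrableBall_of_measure_singleton_ne_top _
    (fun p => (measure_singleton_eq_weight p).trans_ne (weight_ne_top p)) spike
  rcases hdichotomy spike hloc with hnull | huniv
  · have h10 : weight (1, 0) = 0 := by
      rw [← measure_singleton_eq_weight]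
      exact measure_mono_null (singleton_subset_iff.2 centeredMaximal_spike_one_eq_top) hnull
    simp [weight] at h10
  · exact hfinite.ne (huniv.symm.subset (mem_univ (-1, 0)))
end

section
/- Consider ℤ² with the supremum metric d_∞ and the measure μ defined by μ(n,m) = 4^{|m|} if n = 0; μ(n,m) = 2^{n²} if n < 0 and m = 0; and μ(n,m) = 1 otherwise. Let f(n,m) = 2^n if n > 0 and m = 0, and f(n,m) = 0 otherwise. Then the non-centered maximal function satisfies Mf(1,0) = ∞ and Mf(−1,0) < ∞; consequently the non-centered maximal operator M associated with this space does not possess the dichotomy property. -/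
open MeasureTheory Metric Filter Set ENNReal

/-! Balls through `(1, 0)` that avoid the column `n = 0` only see weight `1`; the ball of radius
`k + 1` centred at `(k + 1, 0)` has measure `(2k + 1)²` but contains `(2k + 1, 0)`, where
`f = 2^(2k+1)`, so the averages of `f` are unbounded. A ball through `(-1, 0)` reaching the
columns `0 < n < N` must contain a point `(0, m)` with `4^|m| ≥ 2^N`, which dominates the
geometric sum `∑_{0<n<N} 2^n` bounding the integral of `f`; hence `Mf(-1, 0) ≤ 1`. -/

theorem Int.ball_eq_Ioo_ceil (a : ℤ) (r : ℝ) : ball a r = Ioo (a - ⌈r⌉) (a + ⌈r⌉) := by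
  rw [Int.ball_eq_Ioo, sub_eq_add_neg, Int.floor_intCast_add, Int.floor_neg,
    Int.ceil_intCast_add, ← sub_eq_add_neg]

theorem Int.ball_prod_eq (a b : ℤ) (r : ℝ) :
    ball (a, b) r = ↑(Finset.Ioo (a - ⌈r⌉) (a + ⌈r⌉) ×ˢ Finset.Ioo (b - ⌈r⌉) (b + ⌈r⌉)) := by
  rw [← ball_prod_same, Int.ball_eq_Ioo_ceil, Int.ball_eq_Ioo_ceil, Finset.coe_product,
    Finset.coe_Ioo, Finset.coe_Ioo]

section CountWithDensity

variable {α : Type*} [MeasurableSpace α] [MeasurableSingletonClass α]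

theorem le_count_withDensity {w : α → ℝ≥0∞} {s : Set α} {q : α} (hq : q ∈ s) :
    w q ≤ Measure.count.withDensity w s := by
  simpa using measure_mono (μ := Measure.count.withDensity w) (singleton_subset_iff.2 hq)

variable [Countable α]

theorem setLIntegral_count_withDensity_finset (w g : α → ℝ≥0∞) (s : Finset α) :
    ∫⁻ p in s, g p ∂Measure.count.withDensity w = ∑ p ∈ s, g p * w p := by
  rw [setLIntegral_withDensity_eq_setLIntegral_mul _ (measurable_of_countable _)
    (measurable_of_countable _) s.measurableSet, lintegral_finset]
  simp [mul_comm]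

theorem count_withDensity_finset (w : α → ℝ≥0∞) (s : Finset α) :
    Measure.count.withDensity w s = ∑ p ∈ s, w p := by
  simpa using setLIntegral_count_withDensity_finset w 1 s

theorem locallyIntegrableBall_count_withDensity [PseudoMetricSpace α] [ProperSpace α]
    [DiscreteTopology α] {w : α → ℝ≥0∞} (hw : ∀ p, w p ≠ ⊤) (f : α → ℝ) :
    LocallyIntegrableBall (Measure.count.withDensity w) f := by
  intro c r _
  have hfin := (isCompact_closedBall c r).finite_of_discrete.subset ball_subset_closedBall
  rw [← hfin.coe_toFinset, setLIntegral_count_withDensity_finset]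
  exact ENNReal.sum_lt_top.2 fun p _ => ENNReal.mul_lt_top ENNReal.ofReal_lt_top (hw p).lt_top

end CountWithDensity

section Maximal

variable {X : Type*} [MeasurableSpace X] [PseudoMetricSpace X] {μ : Measure X} {f : X → ℝ}

theorem le_noncenteredMaximal {x c : X} {r : ℝ} (hr : 0 < r) (hx : x ∈ ball c r) :
    (∫⁻ y in ball c r, ENNReal.ofReal |f y| ∂μ) / μ (ball c r) ≤ noncenteredMaximal μ f x :=
  le_iSup_of_le c <| le_iSup_of_le r <| le_iSup_of_le hr <| le_iSup_of_le hx le_rfl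

theorem noncenteredMaximal_le_iff {x : X} {C : ℝ≥0∞} :
    noncenteredMaximal μ f x ≤ C ↔ ∀ (c : X) (r : ℝ), 0 < r → x ∈ ball c r →
      (∫⁻ y in ball c r, ENNReal.ofReal |f y| ∂μ) / μ (ball c r) ≤ C := by
  simp only [noncenteredMaximal, iSup_le_iff]

variable (μ) in
def NoncenteredMaximalDichotomy : Prop :=
  ∀ g : X → ℝ, LocallyIntegrableBall μ g →
    μ {x | noncenteredMaximal μ g x = ⊤} = 0 ∨ {x | noncenteredMaximal μ g x = ⊤} = univ

theorem not_noncenteredMaximalDichotomy (hf : LocallyIntegrableBall μ f) {x y : X}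
    (hx : noncenteredMaximal μ f x = ⊤) (hμx : μ {x} ≠ 0) (hy : noncenteredMaximal μ f y ≠ ⊤) :
    ¬ NoncenteredMaximalDichotomy μ := fun h =>
  (h f hf).elim (fun h0 => hμx (measure_mono_null (singleton_subset_iff.2 hx) h0))
    fun huniv => hy (huniv.symm ▸ mem_univ y : y ∈ {x | noncenteredMaximal μ f x = ⊤})

end Maximal

theorem mul_sq_le_two_pow (n : ℕ) : n * (4 * n + 9) ^ 2 ≤ 2 ^ (4 * n + 9) := by
  have hn : n < 2 ^ n := Nat.lt_two_pow_self
  have hlin : 4 * n + 9 ≤ 2 ^ (n + 4) := by rw [pow_add]; omega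
  calc n * (4 * n + 9) ^ 2 ≤ 2 ^ n * (2 ^ (n + 4)) ^ 2 := by gcongr
    _ = 2 ^ (3 * n + 8) := by ring
    _ ≤ 2 ^ (4 * n + 9) := Nat.pow_le_pow_right two_pos (by omega)

namespace Example4

noncomputable def weight (p : ℤ × ℤ) : ℝ≥0∞ :=
  if p.1 = 0 then 4 ^ p.2.natAbs
  else if p.1 < 0 ∧ p.2 = 0 then 2 ^ (p.1 ^ 2).toNat
  else 1

noncomputable def f (p : ℤ × ℤ) : ℝ :=
  if 0 < p.1 ∧ p.2 = 0 then 2 ^ p.1.toNat else 0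

-- The density of `|f| dμ`; it is `ℕ`-valued because `weight = 1` on the support of `f`.
def fWeighted (p : ℤ × ℤ) : ℕ :=
  if 0 < p.1 ∧ p.2 = 0 then 2 ^ p.1.toNat else 0

local notation "μ" => Measure.count.withDensity weight

theorem one_le_weight (p : ℤ × ℤ) : 1 ≤ weight p := by
  unfold weight
  split_ifs <;> simp [one_le_pow₀]

theorem weight_ne_top (p : ℤ × ℤ) : weight p ≠ ⊤ := by
  unfold weight
  split_ifs <;> simp

theorem weight_of_pos {p : ℤ × ℤ} (hp : 0 < p.1) : weight p = 1 := by
  simp [weight, hp.ne', hp.not_gt]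

theorem ofReal_abs_f_mul_weight (p : ℤ × ℤ) : ENNReal.ofReal |f p| * weight p = fWeighted p := by
  by_cases hp : 0 < p.1 ∧ p.2 = 0
  · simp [f, fWeighted, hp, weight_of_pos hp.1, ENNReal.ofReal_pow]
  · simp [f, fWeighted, hp]

theorem setLIntegral_f (s : Finset (ℤ × ℤ)) :
    ∫⁻ p in s, ENNReal.ofReal |f p| ∂μ = ↑(∑ p ∈ s, fWeighted p) := by
  simp [setLIntegral_count_withDensity_finset, ofReal_abs_f_mul_weight]

theorem measure_ne_zero {s : Set (ℤ × ℤ)} (hs : s.Nonempty) : μ s ≠ 0 :=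
  let ⟨p, hp⟩ := hs
  (zero_lt_one.trans_le ((one_le_weight p).trans (le_count_withDensity hp))).ne'

theorem sum_fWeighted_lt {s : Finset (ℤ × ℤ)} {N : ℕ} (hs : ∀ p ∈ s, p.1 < N) :
    ∑ p ∈ s, fWeighted p < 2 ^ N := by
  classical
  have hinj : Set.InjOn (fun p : ℤ × ℤ => p.1.toNat) {p | 0 < p.1 ∧ p.2 = 0} := by
    rintro ⟨a, b⟩ ⟨ha, hb⟩ ⟨a', b'⟩ ⟨ha', hb'⟩ h
    simp only at ha hb ha' hb' h
    ext <;> simp only <;> omega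
  calc ∑ p ∈ s, fWeighted p = ∑ p ∈ s with 0 < p.1 ∧ p.2 = 0, 2 ^ p.1.toNat :=
        (Finset.sum_filter _ _).symm
    _ = ∑ k ∈ (s.filter fun p => 0 < p.1 ∧ p.2 = 0).image (·.1.toNat), 2 ^ k :=
        (Finset.sum_image fun p hp q hq => hinj (Finset.mem_filter.1 hp).2
          (Finset.mem_filter.1 hq).2).symm
    _ < 2 ^ N := Nat.geomSum_lt le_rfl fun k hk => by
        obtain ⟨p, hp, rfl⟩ := Finset.mem_image.1 hk
        obtain ⟨hps, hp1, -⟩ := Finset.mem_filter.1 hp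
        have := hs p hps
        omega

theorem two_pow_div_sq_le_noncenteredMaximal_f (k : ℕ) :
    (2 ^ (2 * k + 1) / (2 * k + 1) ^ 2 : ℝ≥0∞) ≤ noncenteredMaximal μ f (1, 0) := by
  have hball : ball (((k + 1 : ℕ) : ℤ), (0 : ℤ)) ((k + 1 : ℕ) : ℝ) =
      ↑(Finset.Ioo 0 (2 * k + 2 : ℤ) ×ˢ Finset.Ioo (-(k + 1 : ℤ)) (k + 1)) := by
    rw [Int.ball_prod_eq, Int.ceil_natCast]
    congr 3 <;> push_cast <;> ring
  have hnum : (2 ^ (2 * k + 1) : ℝ≥0∞) ≤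
      ∫⁻ p in ball (((k + 1 : ℕ) : ℤ), (0 : ℤ)) ((k + 1 : ℕ) : ℝ), ENNReal.ofReal |f p| ∂μ := by
    have hmem : ((2 * k + 1 : ℤ), (0 : ℤ)) ∈
        Finset.Ioo 0 (2 * k + 2 : ℤ) ×ˢ Finset.Ioo (-(k + 1 : ℤ)) (k + 1) := by
      simp only [Finset.mem_product, Finset.mem_Ioo]
      omega
    have hval : fWeighted (2 * k + 1, 0) = 2 ^ (2 * k + 1) := by
      rw [fWeighted, if_pos (by omega)]
      congr
    rw [hball, setLIntegral_f]
    exact_mod_cast hval ▸ Finset.single_le_sum (f := fWeighted) (fun _ _ => Nat.zero_le _) hmem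
  have hden : μ (ball (((k + 1 : ℕ) : ℤ), (0 : ℤ)) ((k + 1 : ℕ) : ℝ)) = (2 * k + 1) ^ 2 := by
    rw [hball, count_withDensity_finset, Finset.sum_congr rfl fun p hp => weight_of_pos
      (Finset.mem_Ioo.1 (Finset.mem_product.1 hp).1).1, Finset.sum_const, Finset.card_product,
      Int.card_Ioo, Int.card_Ioo, show (2 * k + 2 - 0 - 1 : ℤ).toNat = 2 * k + 1 by omega,
      show ((k : ℤ) + 1 - -(k + 1) - 1).toNat = 2 * k + 1 by omega, nsmul_one]
    push_cast
    ring
  calc (2 ^ (2 * k + 1) / (2 * k + 1) ^ 2 : ℝ≥0∞) ≤ _ := by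
        rw [← hden]
        exact ENNReal.div_le_div_right hnum _
    _ ≤ noncenteredMaximal μ f (1, 0) := le_noncenteredMaximal (by positivity) <| by
        rw [hball]
        simp only [Finset.coe_product, Finset.coe_Ioo, mem_prod, mem_Ioo]
        omega

theorem noncenteredMaximal_f_one_zero : noncenteredMaximal μ f (1, 0) = ⊤ := by
  refine ENNReal.eq_top_of_forall_nnreal_le fun C => ?_
  obtain ⟨n, hn⟩ := exists_nat_ge C
  calc (C : ℝ≥0∞) ≤ n := by exact_mod_cast hn
    _ ≤ 2 ^ (4 * n + 9) / (4 * n + 9) ^ 2 := by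
        rw [ENNReal.le_div_iff_mul_le (by simp) (by simp)]
        exact_mod_cast mul_sq_le_two_pow n
    _ ≤ noncenteredMaximal μ f (1, 0) := by
        convert two_pow_div_sq_le_noncenteredMaximal_f (2 * n + 4) using 2 <;> push_cast <;> ring

theorem noncenteredMaximal_f_neg_one_zero_le_one : noncenteredMaximal μ f (-1, 0) ≤ 1 := by
  rw [noncenteredMaximal_le_iff]
  rintro ⟨a, b⟩ r hr hx
  have hR : 0 < ⌈r⌉ := Int.ceil_pos.2 hr
  rw [Int.ball_prod_eq] at hx ⊢
  simp only [Finset.coe_product, Finset.coe_Ioo, mem_prod, mem_Ioo] at hx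
  set R := ⌈r⌉
  set N := (a + R).toNat
  have hnum : ∑ p ∈ Finset.Ioo (a - R) (a + R) ×ˢ Finset.Ioo (b - R) (b + R), fWeighted p
      ≤ 2 ^ N := by
    refine (sum_fWeighted_lt fun p hp => ?_).le
    simp only [Finset.mem_product, Finset.mem_Ioo] at hp
    omega
  have hden : (2 ^ N : ℝ≥0∞) ≤
      μ ↑(Finset.Ioo (a - R) (a + R) ×ˢ Finset.Ioo (b - R) (b + R)) := by
    rcases Nat.eq_zero_or_pos N with hN | hN
    · rw [hN, pow_zero]
      refine (one_le_weight (-1, 0)).trans (le_count_withDensity ?_)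
      simp only [Finset.coe_product, Finset.coe_Ioo, mem_prod, mem_Ioo]
      omega
    · obtain ⟨m, hm, hRm⟩ : ∃ m, (b - R < m ∧ m < b + R) ∧ R - 1 ≤ m.natAbs := by
        rcases le_total 0 b with hb | hb
        exacts [⟨b + R - 1, by omega, by omega⟩, ⟨b - R + 1, by omega, by omega⟩]
      calc (2 ^ N : ℝ≥0∞) ≤ 4 ^ m.natAbs := by
            rw [show (4 : ℝ≥0∞) = 2 ^ 2 by norm_num, ← pow_mul]
            exact pow_le_pow_right₀ one_le_two (by omega)
        _ = weight (0, m) := by simp [weight]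
        _ ≤ _ := le_count_withDensity <| by
            simp only [Finset.coe_product, Finset.coe_Ioo, mem_prod, mem_Ioo]
            omega
  rw [setLIntegral_f]
  calc _ ≤ (2 ^ N : ℝ≥0∞) / 2 ^ N := ENNReal.div_le_div (by exact_mod_cast hnum) hden
    _ = 1 := ENNReal.div_self (by simp) (by simp)

end Example4

/-- On `ℤ²` with the supremum metric and measure with point weights
`μ(n,m) = 4^{|m|}` if `n = 0`, `μ(n,m) = 2^{n²}` if `n < 0, m = 0`, and `1` otherwise,
for `f(n,m) = 2^n` if `n > 0, m = 0` and `0` otherwise, one has `Mf(1,0) = ∞` and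
`Mf(−1,0) < ∞`; consequently the non-centered maximal operator does not possess the
dichotomy property. -/
theorem noncenteredMaximal_no_dichotomy_example4 (μ : Measure (ℤ × ℤ))
    (hμ : μ = Measure.count.withDensity
      (fun p : ℤ × ℤ =>
        if p.1 = 0 then (4 : ℝ≥0∞) ^ p.2.natAbs
        else if p.1 < 0 ∧ p.2 = 0 then (2 : ℝ≥0∞) ^ (p.1 ^ 2).toNat
        else 1))
    (f : ℤ × ℤ → ℝ)
    (hf : f = fun p : ℤ × ℤ => if 0 < p.1 ∧ p.2 = 0 then (2 : ℝ) ^ p.1.toNat else 0) :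
    noncenteredMaximal μ f ((1, 0) : ℤ × ℤ) = ⊤ ∧
    noncenteredMaximal μ f ((-1, 0) : ℤ × ℤ) < ⊤ ∧
    ¬ (∀ g : ℤ × ℤ → ℝ, LocallyIntegrableBall μ g →
        μ {x | noncenteredMaximal μ g x = ⊤} = 0 ∨
          {x | noncenteredMaximal μ g x = ⊤} = Set.univ) := by
  obtain rfl : μ = Measure.count.withDensity Example4.weight := hμ
  obtain rfl : f = Example4.f := hf
  have htop := Example4.noncenteredMaximal_f_one_zero
  have hfin := Example4.noncenteredMaximal_f_neg_one_zero_le_one.trans_lt one_lt_top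
  exact ⟨htop, hfin, not_noncenteredMaximalDichotomy
    (locallyIntegrableBall_count_withDensity Example4.weight_ne_top _) htop
    (Example4.measure_ne_zero (singleton_nonempty _)) hfin.ne⟩
end

section
/- On ℝ² with the Euclidean metric, let μ = λ₁ + λ₂, where λ₁ is one-dimensional Lebesgue measure on the segment A = [0,1] × {0} (the pushforward of Lebesgue measure on [0,1] under x ↦ (x,0)) and λ₂ is two-dimensional Lebesgue measure. For n ≥ 1 let S_n = [0,1] × (2^{−n²}, 2^{−n²+1}) and f = Σ_{n=1}^{∞} 2^n χ_{S_n}. Then f ∈ L¹(μ) with ‖f‖_{L¹(μ)} ≤ 2, f has compact support, and the non-centered maximal function satisfies Mf(x₀, 0) = ∞ for every x₀ ∈ [0,1]. -/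
open MeasureTheory Metric Filter Set ENNReal

/-! The slabs `S_n` are disjoint and `2^n μ(S_n) = 2^n 2^{-n²} ≤ 2^{1-n}`, which gives the `L¹`
bound. For `Mf(x₀, 0) = ∞`, let `h = 2^{-n²}` and take the ball of radius `2h` centred at height
`2h - h³/4` above `(x₀, 0)`. It contains `(x₀, 0)`, but it meets the segment only in a chord of
length at most `2h²`, so its `μ`-measure is `O(h²)`; meanwhile it contains an `h × h` square of
`S_n`, on which `f = 2^n`. The average of `f` over this ball is therefore at least `2^n / 18`. -/

theorem ENNReal.ofReal_tsum_le_tsum_ofReal {ι : Type*} {g : ι → ℝ} (hg : ∀ i, 0 ≤ g i) :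
    ENNReal.ofReal (∑' i, g i) ≤ ∑' i, ENNReal.ofReal (g i) := by
  by_cases hs : Summable g
  · exact (ENNReal.ofReal_tsum_of_nonneg hg hs).le
  · simp [tsum_eq_zero_of_not_summable hs]

theorem setLIntegral_div_le_noncenteredMaximal {X : Type*} [MeasurableSpace X]
    [PseudoMetricSpace X] (μ : Measure X) (f : X → ℝ) {x c : X} {r : ℝ}
    (hr : 0 < r) (hx : x ∈ ball c r) :
    (∫⁻ y in ball c r, ENNReal.ofReal |f y| ∂μ) / μ (ball c r) ≤ noncenteredMaximal μ f x :=
  le_iSup₂_of_le c r (le_iSup₂_of_le hr hx le_rfl)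

local notation "ℝ²" => EuclideanSpace ℝ (Fin 2)

namespace MaximalSegment

def rectangle (A B : Set ℝ) : Set ℝ² := {p | p 0 ∈ A ∧ p 1 ∈ B}

theorem rectangle_eq_preimage_pi (A B : Set ℝ) :
    rectangle A B = WithLp.ofLp ⁻¹' univ.pi ![A, B] := by
  ext p
  simp [rectangle, Set.mem_pi, Fin.forall_fin_two]

theorem rectangle_mono {A A' B B' : Set ℝ} (hA : A ⊆ A') (hB : B ⊆ B') :
    rectangle A B ⊆ rectangle A' B' :=
  fun _ hp => ⟨hA hp.1, hB hp.2⟩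

theorem measurableSet_rectangle {A B : Set ℝ} (hA : MeasurableSet A) (hB : MeasurableSet B) :
    MeasurableSet (rectangle A B) := by
  rw [rectangle_eq_preimage_pi]
  exact (PiLp.volume_preserving_ofLp (Fin 2)).measurable (.univ_pi <| Fin.forall_fin_two.2 ⟨hA, hB⟩)

theorem volume_rectangle (A B : Set ℝ) : volume (rectangle A B) = volume A * volume B := by
  calc volume (rectangle A B) = volume (univ.pi ![A, B]) := by
        rw [rectangle_eq_preimage_pi]
        exact
          (EuclideanSpace.volume_preserving_symm_measurableEquiv_toLp _).measure_preimage_equiv _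
    _ = volume A * volume B := by simp [volume_pi_pi, Fin.prod_univ_two]

theorem isCompact_rectangle {A B : Set ℝ} (hA : IsCompact A) (hB : IsCompact B) :
    IsCompact (rectangle A B) := by
  rw [rectangle_eq_preimage_pi]
  exact (PiLp.homeomorph 2 _).isCompact_preimage.2
    (isCompact_univ_pi <| Fin.forall_fin_two.2 ⟨hA, hB⟩)

theorem mem_ball_iff_sq {p c : ℝ²} {r : ℝ} (hr : 0 < r) :
    p ∈ ball c r ↔ (p 0 - c 0) ^ 2 + (p 1 - c 1) ^ 2 < r ^ 2 := by
  rw [mem_ball, EuclideanSpace.dist_eq, Real.sqrt_lt' hr, Fin.sum_univ_two, Real.dist_eq,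
    Real.dist_eq, sq_abs, sq_abs]

-- `slab`, `spike`, `onAxis` and `segmentMeasure` are the paper's `S_n`, `f`, `x ↦ (x, 0)` and `μ`.
def strip (n : ℕ) : Set ℝ := Ioo ((2 : ℝ) ^ (-(n : ℤ) ^ 2)) ((2 : ℝ) ^ (-(n : ℤ) ^ 2 + 1))

noncomputable def height (n : ℕ) : ℝ := 2 ^ (-(n : ℤ) ^ 2)

theorem height_pos (n : ℕ) : 0 < height n :=
  _root_.zpow_pos two_pos _

theorem height_le_one (n : ℕ) : height n ≤ 1 :=
  zpow_le_one_of_nonpos₀ one_le_two (neg_nonpos.2 (sq_nonneg _))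

theorem strip_eq_Ioo (n : ℕ) : strip n = Ioo (height n) (2 * height n) := by
  rw [strip, height, zpow_add_one₀ two_ne_zero, mul_comm]

theorem strip_subset_Ioo (n : ℕ) : strip n ⊆ Ioo 0 2 := by
  rw [strip_eq_Ioo]
  exact Ioo_subset_Ioo (height_pos n).le (by linarith [height_le_one n])

theorem volume_strip (n : ℕ) : volume (strip n) = ENNReal.ofReal (height n) := by
  rw [strip_eq_Ioo, Real.volume_Ioo]
  ring_nf

theorem pairwise_disjoint_strip : Pairwise (Function.onFun Disjoint strip) := by
  refine (pairwise_disjoint_on strip).2 fun m n hmn => ?_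
  have : (2 : ℝ) ^ (-(n : ℤ) ^ 2 + 1) ≤ 2 ^ (-(m : ℤ) ^ 2) :=
    zpow_le_zpow_right₀ one_le_two (by nlinarith [Int.ofNat_lt.2 hmn, Int.natCast_nonneg m])
  exact Ioo_disjoint_Ioo.2 ((min_le_right _ _).trans (this.trans (le_max_left _ _)))

def slab (n : ℕ) : Set ℝ² := rectangle (Icc 0 1) (strip n)

theorem measurableSet_slab (n : ℕ) : MeasurableSet (slab n) :=
  measurableSet_rectangle measurableSet_Icc measurableSet_Ioo

theorem slab_subset (n : ℕ) : slab n ⊆ rectangle (Icc 0 1) (Icc 0 2) :=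
  rectangle_mono subset_rfl ((strip_subset_Ioo n).trans Ioo_subset_Icc_self)

theorem pairwise_disjoint_slab : Pairwise (Function.onFun Disjoint slab) :=
  fun _ _ hmn => disjoint_left.2 fun _ hp hq =>
    disjoint_left.1 (pairwise_disjoint_strip hmn) hp.2 hq.2

noncomputable def spike (p : ℝ²) : ℝ :=
  ∑' n : ℕ, (slab (n + 1)).indicator (fun _ => (2 : ℝ) ^ (n + 1)) p

theorem spike_eq_of_mem_slab {k : ℕ} {p : ℝ²} (hp : p ∈ slab (k + 1)) :
    spike p = 2 ^ (k + 1) := by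
  rw [spike, tsum_eq_single k fun n hn => indicator_of_notMem
    (disjoint_left.1 (pairwise_disjoint_slab (by omega : k + 1 ≠ n + 1)) hp) _]
  exact indicator_of_mem hp _

theorem spike_eq_zero_of_notMem {p : ℝ²} (hp : p ∉ rectangle (Icc 0 1) (Icc 0 2)) :
    spike p = 0 := by
  simp [spike, indicator_of_notMem fun h => hp (slab_subset _ h)]

theorem hasCompactSupport_spike : HasCompactSupport spike :=
  .intro (isCompact_rectangle isCompact_Icc isCompact_Icc) fun _ => spike_eq_zero_of_notMem

theorem ofReal_abs_spike_le (p : ℝ²) :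
    ENNReal.ofReal |spike p| ≤
      ∑' n : ℕ, (slab (n + 1)).indicator (fun _ => (2 : ℝ≥0∞) ^ (n + 1)) p := by
  have hnonneg (n : ℕ) : 0 ≤ (slab (n + 1)).indicator (fun _ => (2 : ℝ) ^ (n + 1)) p :=
    indicator_nonneg (fun _ _ => by positivity) _
  rw [spike, abs_of_nonneg (tsum_nonneg hnonneg)]
  refine (ENNReal.ofReal_tsum_le_tsum_ofReal hnonneg).trans_eq (tsum_congr fun n => ?_)
  by_cases hp : p ∈ slab (n + 1) <;> simp [hp]

def onAxis (x : ℝ) : ℝ² := WithLp.toLp 2 ![x, 0]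

theorem onAxis_zero (x : ℝ) : onAxis x 0 = x := rfl

theorem onAxis_one (x : ℝ) : onAxis x 1 = 0 := rfl

theorem continuous_onAxis : Continuous onAxis := by
  unfold onAxis; fun_prop

noncomputable def segmentMeasure : Measure ℝ² :=
  Measure.map onAxis (volume.restrict (Icc 0 1)) + volume

theorem segmentMeasure_apply {s : Set ℝ²} (hs : MeasurableSet s) :
    segmentMeasure s = volume (onAxis ⁻¹' s ∩ Icc 0 1) + volume s := by
  rw [segmentMeasure, Measure.add_apply, Measure.map_apply continuous_onAxis.measurable hs,
    Measure.restrict_apply (continuous_onAxis.measurable hs)]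

theorem volume_le_segmentMeasure : volume ≤ segmentMeasure :=
  Measure.le_add_left le_rfl

theorem segmentMeasure_slab (n : ℕ) : segmentMeasure (slab n) = ENNReal.ofReal (height n) := by
  have hoff : onAxis ⁻¹' slab n = ∅ :=
    eq_empty_of_forall_notMem fun _ hx => (strip_subset_Ioo n hx.2).1.ne rfl
  rw [segmentMeasure_apply (measurableSet_slab n), hoff, empty_inter, measure_empty, zero_add,
    slab, volume_rectangle, Real.volume_Icc, volume_strip]
  simp

theorem two_pow_mul_height_le (n : ℕ) : (2 : ℝ) ^ (n + 1) * height (n + 1) ≤ 2⁻¹ ^ n := by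
  rw [height, ← zpow_natCast, ← zpow_add₀ two_ne_zero, inv_pow, ← zpow_natCast, ← zpow_neg]
  exact zpow_le_zpow_right₀ one_le_two (by push_cast; nlinarith)

theorem lintegral_spike_le_two : ∫⁻ p, ENNReal.ofReal |spike p| ∂segmentMeasure ≤ 2 :=
  calc ∫⁻ p, ENNReal.ofReal |spike p| ∂segmentMeasure
      ≤ ∫⁻ p, ∑' n : ℕ, (slab (n + 1)).indicator (fun _ => (2 : ℝ≥0∞) ^ (n + 1)) p
          ∂segmentMeasure :=
        lintegral_mono ofReal_abs_spike_le
    _ = ∑' n : ℕ, 2 ^ (n + 1) * segmentMeasure (slab (n + 1)) := by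
        rw [lintegral_tsum fun _ =>
          (measurable_const.indicator (measurableSet_slab _)).aemeasurable]
        simp only [lintegral_indicator_const (measurableSet_slab _)]
    _ ≤ ∑' n : ℕ, (2⁻¹ : ℝ≥0∞) ^ n := by
        refine ENNReal.tsum_le_tsum fun n => ?_
        rw [segmentMeasure_slab, ← ENNReal.ofReal_ofNat 2, ← ENNReal.ofReal_pow zero_le_two,
          ← ENNReal.ofReal_mul (by positivity), ← ENNReal.ofReal_inv_of_pos two_pos,
          ← ENNReal.ofReal_pow (by positivity)]
        exact ENNReal.ofReal_le_ofReal (two_pow_mul_height_le n)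
    _ = 2 := ENNReal.tsum_geometric_two

theorem exists_Icc_subset_unitInterval_mem {x₀ h : ℝ} (hx₀ : x₀ ∈ Icc (0 : ℝ) 1) (hh₀ : 0 ≤ h)
    (hh₁ : h ≤ 1) : ∃ a, Icc a (a + h) ⊆ Icc 0 1 ∧ x₀ ∈ Icc a (a + h) := by
  have hmin : x₀ - h ≤ min x₀ (1 - h) := le_min (by linarith) (by linarith [hx₀.2])
  exact ⟨min x₀ (1 - h), Icc_subset_Icc (le_min hx₀.1 (by linarith))
    (by linarith [min_le_right x₀ (1 - h)]), min_le_left _ _, by linarith⟩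

-- `(2h)² - (2h - h³/4)² ≤ h⁴`: the ball of radius `2h` about this point meets the `x`-axis in a
-- chord of half-length at most `h²`.
noncomputable def probeCenter (x₀ h : ℝ) : ℝ² := WithLp.toLp 2 ![x₀, 2 * h - h ^ 3 / 4]

theorem probeCenter_zero (x₀ h : ℝ) : probeCenter x₀ h 0 = x₀ := rfl

theorem probeCenter_one (x₀ h : ℝ) : probeCenter x₀ h 1 = 2 * h - h ^ 3 / 4 := rfl

section ProbeBall

variable {x₀ h : ℝ}

theorem onAxis_mem_ball_probeCenter (hh₀ : 0 < h) (hh₁ : h ≤ 1) :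
    onAxis x₀ ∈ ball (probeCenter x₀ h) (2 * h) := by
  rw [mem_ball_iff_sq (by positivity), onAxis_zero, onAxis_one, probeCenter_zero, probeCenter_one]
  have hε₀ : 0 < h ^ 3 / 4 := by positivity
  have hε₁ : h ^ 3 / 4 < 4 * h := by nlinarith [pow_le_one₀ hh₀.le hh₁ (n := 2)]
  nlinarith [mul_pos hε₀ (sub_pos.2 hε₁)]

theorem onAxis_preimage_ball_probeCenter_subset (hh₀ : 0 < h) :
    onAxis ⁻¹' ball (probeCenter x₀ h) (2 * h) ⊆ Icc (x₀ - h ^ 2) (x₀ + h ^ 2) := by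
  intro x hx
  rw [mem_preimage, mem_ball_iff_sq (by positivity), onAxis_zero, onAxis_one, probeCenter_zero,
    probeCenter_one] at hx
  have := abs_le_of_sq_le_sq' (by nlinarith : (x - x₀) ^ 2 ≤ (h ^ 2) ^ 2) (by positivity)
  constructor <;> linarith

theorem rectangle_subset_ball_probeCenter {a : ℝ} (hh₀ : 0 < h) (hh₁ : h ≤ 1)
    (ha : x₀ ∈ Icc a (a + h)) :
    rectangle (Ioo a (a + h)) (Ioo h (2 * h)) ⊆ ball (probeCenter x₀ h) (2 * h) := by
  rintro p ⟨hp₀, hp₁⟩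
  rw [mem_ball_iff_sq (by positivity), probeCenter_zero, probeCenter_one]
  have hcube : h ^ 3 / 4 ≤ h := by nlinarith [pow_le_one₀ hh₀.le hh₁ (n := 2)]
  have h₀ : (p 0 - x₀) ^ 2 < h ^ 2 :=
    sq_lt_sq' (by linarith [hp₀.1, ha.2]) (by linarith [hp₀.2, ha.1])
  have h₁ : (p 1 - (2 * h - h ^ 3 / 4)) ^ 2 < h ^ 2 :=
    sq_lt_sq' (by linarith [hp₁.1, pow_pos hh₀ 3]) (by linarith [hp₁.2])
  nlinarith

theorem segmentMeasure_ball_probeCenter_le (hh₀ : 0 < h) :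
    segmentMeasure (ball (probeCenter x₀ h) (2 * h)) ≤ 18 * ENNReal.ofReal (h ^ 2) :=
  calc segmentMeasure (ball (probeCenter x₀ h) (2 * h))
      ≤ volume (Icc (x₀ - h ^ 2) (x₀ + h ^ 2)) +
          ENNReal.ofReal (2 * h) ^ 2 * ENNReal.ofReal Real.pi := by
        rw [segmentMeasure_apply measurableSet_ball, EuclideanSpace.volume_ball_fin_two]
        gcongr
        exact inter_subset_left.trans (onAxis_preimage_ball_probeCenter_subset hh₀)
    _ = ENNReal.ofReal (2 * h ^ 2 + (2 * h) ^ 2 * Real.pi) := by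
        rw [Real.volume_Icc, ← ENNReal.ofReal_pow (by linarith),
          ← ENNReal.ofReal_mul (by positivity), ← ENNReal.ofReal_add (by nlinarith) (by positivity)]
        ring_nf
    _ ≤ 18 * ENNReal.ofReal (h ^ 2) := by
        rw [← ENNReal.ofReal_ofNat 18, ← ENNReal.ofReal_mul (by norm_num)]
        exact ENNReal.ofReal_le_ofReal (by nlinarith [Real.pi_le_four, pow_pos hh₀ 2])

end ProbeBall

theorem two_pow_mul_le_setLIntegral_spike (k : ℕ) {x₀ : ℝ} (hx₀ : x₀ ∈ Icc (0 : ℝ) 1) :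
    2 ^ (k + 1) * ENNReal.ofReal (height (k + 1) ^ 2) ≤
      ∫⁻ p in ball (probeCenter x₀ (height (k + 1))) (2 * height (k + 1)),
        ENNReal.ofReal |spike p| ∂segmentMeasure := by
  set h := height (k + 1)
  have hh₀ : 0 < h := height_pos _
  obtain ⟨a, haI, hxa⟩ := exists_Icc_subset_unitInterval_mem hx₀ hh₀.le (height_le_one _)
  set R := rectangle (Ioo a (a + h)) (Ioo h (2 * h))
  have hR_slab : R ⊆ slab (k + 1) :=
    rectangle_mono (Ioo_subset_Icc_self.trans haI) (strip_eq_Ioo _).symm.subset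
  have hR_meas : MeasurableSet R := measurableSet_rectangle measurableSet_Ioo measurableSet_Ioo
  calc 2 ^ (k + 1) * ENNReal.ofReal (h ^ 2) = 2 ^ (k + 1) * volume R := by
        rw [volume_rectangle, Real.volume_Ioo, Real.volume_Ioo, ← ENNReal.ofReal_mul (by linarith)]
        ring_nf
    _ ≤ 2 ^ (k + 1) * segmentMeasure R := by gcongr; exact volume_le_segmentMeasure
    _ = ∫⁻ p in R, ENNReal.ofReal |spike p| ∂segmentMeasure := by
        rw [setLIntegral_congr_fun hR_meas fun p hp => by rw [spike_eq_of_mem_slab (hR_slab hp)],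
          setLIntegral_const]
        simp
    _ ≤ _ := lintegral_mono_set (rectangle_subset_ball_probeCenter hh₀ (height_le_one _) hxa)

theorem two_pow_div_le_noncenteredMaximal_spike (k : ℕ) {x₀ : ℝ} (hx₀ : x₀ ∈ Icc (0 : ℝ) 1) :
    2 ^ (k + 1) / 18 ≤ noncenteredMaximal segmentMeasure spike (onAxis x₀) := by
  set h := height (k + 1)
  have hh₀ : 0 < h := height_pos _
  have hH : ENNReal.ofReal (h ^ 2) ≠ 0 := (ENNReal.ofReal_pos.2 (by positivity)).ne'
  calc (2 : ℝ≥0∞) ^ (k + 1) / 18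
        = 2 ^ (k + 1) * ENNReal.ofReal (h ^ 2) / (18 * ENNReal.ofReal (h ^ 2)) :=
        (ENNReal.mul_div_mul_right _ _ hH ENNReal.ofReal_ne_top).symm
    _ ≤ (∫⁻ p in ball (probeCenter x₀ h) (2 * h), ENNReal.ofReal |spike p| ∂segmentMeasure) /
          segmentMeasure (ball (probeCenter x₀ h) (2 * h)) :=
        ENNReal.div_le_div (two_pow_mul_le_setLIntegral_spike k hx₀)
          (segmentMeasure_ball_probeCenter_le hh₀)
    _ ≤ _ := setLIntegral_div_le_noncenteredMaximal _ _ (by positivity)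
        (onAxis_mem_ball_probeCenter hh₀ (height_le_one _))

theorem noncenteredMaximal_spike_eq_top {x₀ : ℝ} (hx₀ : x₀ ∈ Icc (0 : ℝ) 1) :
    noncenteredMaximal segmentMeasure spike (onAxis x₀) = ⊤ := by
  have hlim : Tendsto (fun k : ℕ => (2 : ℝ≥0∞) ^ (k + 1) / 18) atTop (nhds ⊤) := by
    simpa [ENNReal.top_div_of_ne_top] using ENNReal.Tendsto.div_const
      ((ENNReal.tendsto_pow_atTop_nhds_top_iff.2 one_lt_two).comp (tendsto_add_atTop_nat 1))
      (b := 18) (Or.inl top_ne_zero)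
  exact top_le_iff.1 (le_of_tendsto' hlim fun k => two_pow_div_le_noncenteredMaximal_spike k hx₀)

end MaximalSegment

open MaximalSegment in
/-- On `ℝ²` with `μ = λ₁ + λ₂`, where `λ₁` is `1`-dimensional Lebesgue
measure on the segment `A = [0,1] × {0}` (the pushforward of Lebesgue measure on `[0,1]`
under `x ↦ (x,0)`) and `λ₂` is `2`-dimensional Lebesgue measure, the function
`f = Σ_{n≥1} 2^n χ_{S_n}` with `S_n = [0,1] × (2^{−n²}, 2^{−n²+1})` satisfies
`‖f‖_{L¹(μ)} ≤ 2`, has compact support, and `Mf(x₀,0) = ∞` for every `x₀ ∈ [0,1]`. -/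
theorem maximal_infinite_on_segment
    (e : ℝ → EuclideanSpace ℝ (Fin 2)) (he : e = fun x => (WithLp.toLp 2 ![x, 0] : EuclideanSpace ℝ (Fin 2)))
    (μ : Measure (EuclideanSpace ℝ (Fin 2)))
    (hμ : μ = Measure.map e (volume.restrict (Set.Icc (0:ℝ) 1)) + volume)
    (S : ℕ → Set (EuclideanSpace ℝ (Fin 2)))
    (hS : S = fun n : ℕ => {p : EuclideanSpace ℝ (Fin 2) | p 0 ∈ Set.Icc (0:ℝ) 1 ∧
      p 1 ∈ Set.Ioo ((2:ℝ) ^ (-(n:ℤ)^2)) ((2:ℝ) ^ (-(n:ℤ)^2 + 1))})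
    (f : EuclideanSpace ℝ (Fin 2) → ℝ)
    (hf : f = fun p => ∑' n : ℕ, Set.indicator (S (n+1)) (fun _ => (2:ℝ) ^ (n+1)) p) :
    (∫⁻ p, ENNReal.ofReal |f p| ∂μ) ≤ 2 ∧
    HasCompactSupport f ∧
    ∀ x₀ ∈ Set.Icc (0:ℝ) 1, noncenteredMaximal μ f (e x₀) = ⊤ := by
  subst he hμ hS hf
  exact ⟨lintegral_spike_le_two, hasCompactSupport_spike,
    fun x₀ hx₀ => noncenteredMaximal_spike_eq_top hx₀⟩
end
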